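/- Let (R, 𝔪) be a graded local ring and I a proper graded ideal of R. If 𝔪² ⊆ I, then I is a graded 1-absorbing prime ideal of R. -/

import Mathlib

/-- `M` is a graded maximal ideal: a proper graded ideal which is maximal among
proper graded ideals. -/
def IsGrMaximal {ι R : Type*} [AddGroup ι] [DecidableEq ι] [CommRing R]
    (𝒜 : ι → AddSubgroup R) [GradedRing 𝒜] (M : HomogeneousIdeal 𝒜) : Prop :=
  M.toIdeal ≠ ⊤ ∧ ∀ J : HomogeneousIdeal 𝒜, J.toIdeal ≠ ⊤ → M.toIdeal ≤ J.toIdeal → J = M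

/-- `(R, 𝔪)` is a graded local ring: `𝔪` is the unique graded maximal ideal of `R`. -/
def IsGrLocal {ι R : Type*} [AddGroup ι] [DecidableEq ι] [CommRing R]
    (𝒜 : ι → AddSubgroup R) [GradedRing 𝒜] (m : HomogeneousIdeal 𝒜) : Prop :=
  IsGrMaximal 𝒜 m ∧ ∀ N : HomogeneousIdeal 𝒜, IsGrMaximal 𝒜 N → N = m

/-! Homogeneous nonunits a, b lie in 𝔪, so ab ∈ 𝔪² ⊆ I. That a homogeneous nonunit lies in 𝔪
comes from the lattice of homogeneous ideals being coatomic: the homogeneous ideal (a) is proper,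
hence lies in a graded maximal ideal, which must be 𝔪. -/

namespace HomogeneousIdeal

variable {ι σ A : Type*} [Semiring A] [DecidableEq ι] [AddMonoid ι] [SetLike σ A]
  [AddSubmonoidClass σ A] (𝒜 : ι → σ) [GradedRing 𝒜]

theorem isCompactElement_top : IsCompactElement (⊤ : HomogeneousIdeal 𝒜) := by
  rw [CompleteLattice.isCompactElement_iff_le_of_directed_sSup_le]
  intro s hne hdir htop
  -- `toIdeal` is an order embedding commuting with `sSup`, so compactness transfers from `Ideal A`.
  have htop' : ⊤ ≤ sSup (toIdeal '' s) := by
    rwa [sSup_image, ← toIdeal_sSup, ← toIdeal_top (𝒜 := 𝒜), toIdeal_le_toIdeal_iff]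
  obtain ⟨-, ⟨J, hJ, rfl⟩, hJtop⟩ :=
    (CompleteLattice.isCompactElement_iff_le_of_directed_sSup_le (Ideal A) ⊤).mp
      Ideal.isCompactElement_top _ (hne.image _)
      (hdir.mono_comp fun _ _ h => toIdeal_le_toIdeal_iff.mpr h) htop'
  exact ⟨J, hJ, toIdeal_le_toIdeal_iff.mp (toIdeal_top (𝒜 := 𝒜) ▸ hJtop)⟩

instance : IsCoatomic (HomogeneousIdeal 𝒜) :=
  CompleteLattice.coatomic_of_top_compact (isCompactElement_top 𝒜)

end HomogeneousIdeal

section GradedLocal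

variable {ι R : Type*} [AddGroup ι] [DecidableEq ι] [CommRing R] {𝒜 : ι → AddSubgroup R}
  [GradedRing 𝒜]

theorem IsCoatom.isGrMaximal {M : HomogeneousIdeal 𝒜} (hM : IsCoatom M) : IsGrMaximal 𝒜 M := by
  refine ⟨fun h => hM.1 (HomogeneousIdeal.toIdeal_injective h), fun J hJ hMJ => ?_⟩
  exact (hM.le_iff.mp hMJ).resolve_left fun h => hJ (by rw [h]; rfl)

theorem IsGrLocal.mem_of_not_isUnit {m : HomogeneousIdeal 𝒜} (hloc : IsGrLocal 𝒜 m) {a : R}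
    (ha : SetLike.IsHomogeneousElem 𝒜 a) (hna : ¬IsUnit a) : a ∈ m.toIdeal := by
  let J : HomogeneousIdeal 𝒜 :=
    ⟨Ideal.span {a}, Ideal.homogeneous_span 𝒜 {a} (by rintro x rfl; exact ha)⟩
  have hJ : J ≠ ⊤ := fun h =>
    hna (Ideal.span_singleton_eq_top.mp (congrArg HomogeneousIdeal.toIdeal h))
  obtain ⟨M, hM, hJM⟩ := (eq_top_or_exists_le_coatom J).resolve_left hJ
  rw [← hloc.2 M hM.isGrMaximal]
  exact hJM (Ideal.mem_span_singleton_self a)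

end GradedLocal

theorem stmt3_general {ι R : Type*} [AddGroup ι] [DecidableEq ι] [CommRing R]
    (𝒜 : ι → AddSubgroup R) [GradedRing 𝒜]
    (m : HomogeneousIdeal 𝒜) (hloc : IsGrLocal 𝒜 m)
    (I : HomogeneousIdeal 𝒜)
    (hm2 : m.toIdeal ^ 2 ≤ I.toIdeal) :
    ∀ a b c : R, SetLike.IsHomogeneousElem 𝒜 a → SetLike.IsHomogeneousElem 𝒜 b →
      SetLike.IsHomogeneousElem 𝒜 c → ¬IsUnit a → ¬IsUnit b → ¬IsUnit c →
      a * b * c ∈ I.toIdeal → a * b ∈ I.toIdeal ∨ c ∈ I.toIdeal := by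
  intro a b c ha hb _ hna hnb _ _
  left
  apply hm2
  rw [sq]
  exact Ideal.mul_mem_mul (hloc.mem_of_not_isUnit ha hna) (hloc.mem_of_not_isUnit hb hnb)

/-- Let `(R, 𝔪)` be a graded local ring and `I` a proper graded ideal of `R`.
If `𝔪² ⊆ I`, then `I` is a graded 1-absorbing prime ideal of `R`. -/
theorem stmt3 {ι R : Type*} [AddGroup ι] [DecidableEq ι] [CommRing R] [Nontrivial R]
    (𝒜 : ι → AddSubgroup R) [GradedRing 𝒜]
    (m : HomogeneousIdeal 𝒜) (hloc : IsGrLocal 𝒜 m)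
    (I : HomogeneousIdeal 𝒜) (hproper : I.toIdeal ≠ ⊤)
    (hm2 : m.toIdeal ^ 2 ≤ I.toIdeal) :
    ∀ a b c : R, SetLike.IsHomogeneousElem 𝒜 a → SetLike.IsHomogeneousElem 𝒜 b →
      SetLike.IsHomogeneousElem 𝒜 c → ¬IsUnit a → ¬IsUnit b → ¬IsUnit c →
      a * b * c ∈ I.toIdeal → a * b ∈ I.toIdeal ∨ c ∈ I.toIdeal :=
  stmt3_general 𝒜 m hloc I hm2
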